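/- Let (V₁, ⟨·,·⟩_h, V₂, B) be a step-two Carnot datum with dim V₁ = m and dim V₂ = m₂, set Q = m + 2m₂, let g be any inner product on V₂, and let ε₁,…,ε_{m₂} be a g-orthonormal basis of V₂. Define Φ_g(x,t) = 16(Q+2)·⟨((J^g_t)² + ‖t‖_g²·id)x, x⟩_h / N_g(x,t)⁶ − 2·Σ_{q=1}^{m₂} ⟨((J^g_{ε_q})² + id)x, x⟩_h / N_g(x,t)². Then δ(g) ≤ (3·√(3(Q+2)) / (2(m+2)^{3/2})) · sup{ |Φ_g(x,t)| : (x,t) ∈ V₁ × V₂, (x,t) ≠ (0,0) }. -/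

import Mathlib

open scoped RealInnerProductSpace

noncomputable section

variable {V₁ : Type*} [NormedAddCommGroup V₁] [InnerProductSpace ℝ V₁] [FiniteDimensional ℝ V₁]
variable {V₂ : Type*} [AddCommGroup V₂] [Module ℝ V₂] [FiniteDimensional ℝ V₂]

/-- `g` is an inner product (symmetric positive-definite bilinear form) on `V₂`. -/
structure IsInnerProd (g : V₂ →ₗ[ℝ] V₂ →ₗ[ℝ] ℝ) : Prop where
  symm : ∀ s t : V₂, g s t = g t s
  posdef : ∀ t : V₂, t ≠ 0 → 0 < g t t

/-- The norm `‖t‖_g = √(g t t)` associated to a vertical inner product `g`. -/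
def gnorm (g : V₂ →ₗ[ℝ] V₂ →ₗ[ℝ] ℝ) (t : V₂) : ℝ := Real.sqrt (g t t)

/-- The Hilbert–Schmidt norm `‖F‖_HS = √(trace(F* F))` of an endomorphism of the
inner product space `V₁`. -/
def hsNorm (F : V₁ →ₗ[ℝ] V₁) : ℝ :=
  Real.sqrt (LinearMap.trace ℝ V₁ (LinearMap.adjoint F ∘ₗ F))

/-- `J` is the J-operator of the bracket `B` with respect to the vertical inner product `g`:
`⟨J_T U, V⟩_h = g(B(U,V), T)` for all `U V : V₁`, `T : V₂`. -/
def IsJOp (B : V₁ →ₗ[ℝ] V₁ →ₗ[ℝ] V₂) (g : V₂ →ₗ[ℝ] V₂ →ₗ[ℝ] ℝ)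
    (J : V₂ → V₁ →ₗ[ℝ] V₁) : Prop :=
  ∀ (T : V₂) (U V : V₁), ⟪J T U, V⟫ = g (B U V) T

/-- The H-type deviation relative to a fixed vertical inner product `g` with J-operator `J`:
`δ(g) = (dim V₁)^{-1/2} sup { ‖(J_T)² + id‖_HS : ‖T‖_g = 1 }`. -/
def deltaOf (g : V₂ →ₗ[ℝ] V₂ →ₗ[ℝ] ℝ) (J : V₂ → V₁ →ₗ[ℝ] V₁) : ℝ :=
  (Real.sqrt (Module.finrank ℝ V₁))⁻¹ *
    sSup ((fun T => hsNorm (J T ∘ₗ J T + LinearMap.id)) '' {T : V₂ | gnorm g T = 1})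

/-- The H-type deviation of a step-two Carnot datum: the infimum of `δ(g)` over all vertical
inner products `g` on `V₂`. -/
def htypeDeviation (B : V₁ →ₗ[ℝ] V₁ →ₗ[ℝ] V₂) : ℝ :=
  sInf { d : ℝ | ∃ (g : V₂ →ₗ[ℝ] V₂ →ₗ[ℝ] ℝ) (J : V₂ → V₁ →ₗ[ℝ] V₁),
    IsInnerProd g ∧ IsJOp B g J ∧ d = deltaOf g J }

end

/-!
Put `A_T = (J_T)² + id`; it is symmetric because `J_T` is skew, and `⟪A_T x, x⟫ = 1 - ‖J_T x‖²`
for unit `x`. Let `D` be the supremum of `|⟪A_T x, x⟫|` over unit `x` and `g`-unit `T`; the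
eigenvalues of `A_T` are bounded by `D`, so `δ(g) ≤ D`. Evaluating `Φ_g` at `(x, sT)` with
`u = N_g(x, sT)⁴ = 1 + 16 s²` gives
`(Q+2)(u-1) ⟪A_T x, x⟫ = u^{3/2} Φ_g(x, sT) + 2u ∑_q ⟪A_{ε_q} x, x⟫`,
hence `(Q+2)(u-1) D ≤ u^{3/2} M + 2u m₂ D` with `M = sup |Φ_g|`, i.e.
`((m+2)u - (Q+2)) D ≤ u^{3/2} M`.
The choice `u = 3(Q+2)/(m+2)` yields the constant. Both suprema are finite because expanding `t`
in the basis `ε` gives `‖J_t x‖ ≤ C ‖t‖_g ‖x‖`.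
-/

open scoped RealInnerProductSpace

noncomputable section

section SkewMaps

variable {V₁ : Type*} [NormedAddCommGroup V₁] [InnerProductSpace ℝ V₁]

theorem hsNorm_le_of_abs_inner_le [FiniteDimensional ℝ V₁] {A : V₁ →ₗ[ℝ] V₁}
    (hA : A.IsSymmetric) {D : ℝ} (hD : 0 ≤ D) (h : ∀ x : V₁, ‖x‖ = 1 → |⟪A x, x⟫| ≤ D) :
    hsNorm A ≤ √(Module.finrank ℝ V₁) * D := by
  set b := hA.eigenvectorBasis rfl
  set μ := hA.eigenvalues rfl
  have hb (i) : A (b i) = μ i • b i := hA.apply_eigenvectorBasis rfl i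
  have hb1 (i) : ‖b i‖ = 1 := b.orthonormal.1 i
  have hμ (i) : |μ i| ≤ D := by
    simpa [hb, real_inner_smul_left, hb1] using h (b i) (hb1 i)
  have htrace : LinearMap.trace ℝ V₁ (LinearMap.adjoint A ∘ₗ A) = ∑ i, μ i ^ 2 := by
    rw [hA.adjoint_eq, LinearMap.trace_eq_sum_inner _ b]
    refine Finset.sum_congr rfl fun i _ => ?_
    simp [hb, real_inner_smul_right, hb1, sq]
  calc hsNorm A = √(∑ i, μ i ^ 2) := by rw [hsNorm, htrace]
    _ ≤ √(∑ _i, D ^ 2) := Real.sqrt_le_sqrt <| Finset.sum_le_sum fun i _ =>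
        sq_le_sq' (abs_le.mp (hμ i)).1 (abs_le.mp (hμ i)).2
    _ = √(Module.finrank ℝ V₁) * D := by
        rw [Finset.sum_const, Finset.card_univ, Fintype.card_fin, nsmul_eq_mul,
          Real.sqrt_mul (Nat.cast_nonneg _), Real.sqrt_sq hD]

theorem inner_apply_apply_self_of_skew {F : V₁ →ₗ[ℝ] V₁}
    (hF : ∀ u v, ⟪F u, v⟫ = -⟪u, F v⟫) (x : V₁) : ⟪F (F x), x⟫ = -‖F x‖ ^ 2 := by
  rw [hF, real_inner_self_eq_norm_sq]

theorem inner_comp_self_add_smul_id_apply_self {F : V₁ →ₗ[ℝ] V₁}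
    (hF : ∀ u v, ⟪F u, v⟫ = -⟪u, F v⟫) (c : ℝ) (x : V₁) :
    ⟪(F ∘ₗ F + c • LinearMap.id : V₁ →ₗ[ℝ] V₁) x, x⟫ = c * ‖x‖ ^ 2 - ‖F x‖ ^ 2 := by
  rw [LinearMap.add_apply, LinearMap.comp_apply, LinearMap.smul_apply, LinearMap.id_apply,
    inner_add_left, inner_apply_apply_self_of_skew hF, real_inner_smul_left,
    real_inner_self_eq_norm_sq]
  ring

theorem inner_comp_self_add_id_apply_self {F : V₁ →ₗ[ℝ] V₁}
    (hF : ∀ u v, ⟪F u, v⟫ = -⟪u, F v⟫) (x : V₁) :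
    ⟪(F ∘ₗ F + LinearMap.id : V₁ →ₗ[ℝ] V₁) x, x⟫ = ‖x‖ ^ 2 - ‖F x‖ ^ 2 := by
  simpa using inner_comp_self_add_smul_id_apply_self hF 1 x

theorem isSymmetric_comp_self_add_id {F : V₁ →ₗ[ℝ] V₁}
    (hF : ∀ u v, ⟪F u, v⟫ = -⟪u, F v⟫) : (F ∘ₗ F + LinearMap.id : V₁ →ₗ[ℝ] V₁).IsSymmetric := by
  refine LinearMap.IsSymmetric.add (fun x y => ?_) LinearMap.IsSymmetric.id
  rw [LinearMap.comp_apply, LinearMap.comp_apply, hF, hF, neg_neg]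

theorem abs_inner_comp_self_add_smul_id_le {F : V₁ →ₗ[ℝ] V₁}
    (hF : ∀ u v, ⟪F u, v⟫ = -⟪u, F v⟫) {C G : ℝ} {x : V₁} (hFx : ‖F x‖ ≤ C * (G * ‖x‖)) :
    |⟪(F ∘ₗ F + G ^ 2 • LinearMap.id : V₁ →ₗ[ℝ] V₁) x, x⟫| ≤ (C ^ 2 + 1) * (G ^ 2 * ‖x‖ ^ 2) := by
  have hsq : ‖F x‖ ^ 2 ≤ C ^ 2 * (G ^ 2 * ‖x‖ ^ 2) :=
    (pow_le_pow_left₀ (norm_nonneg _) hFx 2).trans_eq (by ring)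
  have h₁ : 0 ≤ G ^ 2 * ‖x‖ ^ 2 := by positivity
  have h₂ : 0 ≤ C ^ 2 * (G ^ 2 * ‖x‖ ^ 2) := by positivity
  rw [inner_comp_self_add_smul_id_apply_self hF, abs_le]
  constructor <;> nlinarith [sq_nonneg ‖F x‖]

end SkewMaps

section Orthonormal

variable {V₂ : Type*} [AddCommGroup V₂] [Module ℝ V₂]

theorem gnorm_smul (g : V₂ →ₗ[ℝ] V₂ →ₗ[ℝ] ℝ) (s : ℝ) (t : V₂) :
    gnorm g (s • t) = |s| * gnorm g t := by
  simp [gnorm, ← mul_assoc, Real.sqrt_mul (mul_self_nonneg s), Real.sqrt_mul_self_eq_abs]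

variable {g : V₂ →ₗ[ℝ] V₂ →ₗ[ℝ] ℝ} {ι : Type*} [Fintype ι] [DecidableEq ι] {ε : ι → V₂}

theorem eq_sum_apply_smul_of_orthonormal [FiniteDimensional ℝ V₂]
    (hε : ∀ q r, g (ε q) (ε r) = if q = r then 1 else 0)
    (hcard : Fintype.card ι = Module.finrank ℝ V₂) (t : V₂) :
    t = ∑ q, g t (ε q) • ε q := by
  have hli : LinearIndependent ℝ ε :=
    LinearMap.linearIndependent_of_isOrthoᵢ (B := g)
      (fun q r hqr => by simp [Function.onFun, hε, hqr]) (fun q => by simp [hε])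
  have ht : t ∈ Submodule.span ℝ (Set.range ε) := by
    rw [hli.span_eq_top_of_card_eq_finrank' hcard]; trivial
  obtain ⟨c, rfl⟩ := (Submodule.mem_span_range_iff_exists_fun ℝ).mp ht
  simp [map_sum, hε]

theorem apply_self_eq_sum_sq_of_orthonormal [FiniteDimensional ℝ V₂]
    (hε : ∀ q r, g (ε q) (ε r) = if q = r then 1 else 0)
    (hcard : Fintype.card ι = Module.finrank ℝ V₂) (t : V₂) :
    g t t = ∑ q, g t (ε q) ^ 2 := by
  conv_lhs => rw [eq_sum_apply_smul_of_orthonormal hε hcard t]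
  simp [map_sum, hε, sq]

theorem abs_apply_le_gnorm_of_orthonormal [FiniteDimensional ℝ V₂]
    (hε : ∀ q r, g (ε q) (ε r) = if q = r then 1 else 0)
    (hcard : Fintype.card ι = Module.finrank ℝ V₂) (t : V₂) (q : ι) :
    |g t (ε q)| ≤ gnorm g t := by
  refine Real.abs_le_sqrt ?_
  rw [apply_self_eq_sum_sq_of_orthonormal hε hcard t]
  exact Finset.single_le_sum (fun r _ => sq_nonneg (g t (ε r))) (Finset.mem_univ q)

end Orthonormal

namespace IsJOp

variable {V₁ : Type*} [NormedAddCommGroup V₁] [InnerProductSpace ℝ V₁]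
variable {V₂ : Type*} [AddCommGroup V₂] [Module ℝ V₂]

variable {B : V₁ →ₗ[ℝ] V₁ →ₗ[ℝ] V₂} {g : V₂ →ₗ[ℝ] V₂ →ₗ[ℝ] ℝ} {J : V₂ → V₁ →ₗ[ℝ] V₁}

theorem inner_apply_eq_neg (hJ : IsJOp B g J) (hB : B.IsAlt) (T : V₂) (u v : V₁) :
    ⟪J T u, v⟫ = -⟪u, J T v⟫ := by
  rw [hJ, real_inner_comm, hJ, ← hB.neg, map_neg, LinearMap.neg_apply]

theorem smul_apply (hJ : IsJOp B g J) (s : ℝ) (T : V₂) (x : V₁) : J (s • T) x = s • J T x :=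
  ext_inner_right ℝ fun v => by simp [hJ _ x v, real_inner_smul_left]

theorem sum_smul_apply (hJ : IsJOp B g J) {ι : Type*} [Fintype ι] (c : ι → ℝ) (T : ι → V₂)
    (x : V₁) : J (∑ q, c q • T q) x = ∑ q, c q • J (T q) x :=
  ext_inner_right ℝ fun v => by simp [hJ _ x v, sum_inner, real_inner_smul_left]

theorem inner_smul_apply_self (hJ : IsJOp B g J) (hB : B.IsAlt) {T : V₂}
    (hT : gnorm g T = 1) (s : ℝ) (x : V₁) :
    ⟪(J (s • T) ∘ₗ J (s • T) + gnorm g (s • T) ^ 2 • LinearMap.id : V₁ →ₗ[ℝ] V₁) x, x⟫ =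
      s ^ 2 * ⟪(J T ∘ₗ J T + LinearMap.id : V₁ →ₗ[ℝ] V₁) x, x⟫ := by
  rw [inner_comp_self_add_smul_id_apply_self (hJ.inner_apply_eq_neg hB _),
    inner_comp_self_add_id_apply_self (hJ.inner_apply_eq_neg hB _), gnorm_smul, hT,
    hJ.smul_apply, norm_smul, Real.norm_eq_abs]
  simp only [mul_one, mul_pow, sq_abs]
  ring

theorem exists_norm_apply_le [FiniteDimensional ℝ V₁] [FiniteDimensional ℝ V₂]
    (hJ : IsJOp B g J) {ι : Type*} [Fintype ι] [DecidableEq ι] {ε : ι → V₂}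
    (hε : ∀ q r, g (ε q) (ε r) = if q = r then 1 else 0)
    (hcard : Fintype.card ι = Module.finrank ℝ V₂) :
    ∃ C : ℝ, ∀ t x, ‖J t x‖ ≤ C * (gnorm g t * ‖x‖) := by
  refine ⟨∑ q, ‖(J (ε q)).toContinuousLinearMap‖, fun t x => ?_⟩
  calc ‖J t x‖ = ‖∑ q, g t (ε q) • J (ε q) x‖ := by
        rw [← hJ.sum_smul_apply, ← eq_sum_apply_smul_of_orthonormal hε hcard t]
    _ ≤ ∑ q, |g t (ε q)| * ‖J (ε q) x‖ :=
        (norm_sum_le _ _).trans_eq (by simp [norm_smul])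
    _ ≤ ∑ q, gnorm g t * (‖(J (ε q)).toContinuousLinearMap‖ * ‖x‖) := by
        gcongr with q
        exacts [Real.sqrt_nonneg _, abs_apply_le_gnorm_of_orthonormal hε hcard t q,
          (J (ε q)).toContinuousLinearMap.le_opNorm x]
    _ = _ := by rw [← Finset.mul_sum, ← Finset.sum_mul]; ring

end IsJOp

section KaplanNorm

variable {V₁ : Type*} [NormedAddCommGroup V₁] {V₂ : Type*} [AddCommGroup V₂] [Module ℝ V₂]

def kaplanNorm (g : V₂ →ₗ[ℝ] V₂ →ₗ[ℝ] ℝ) (x : V₁) (t : V₂) : ℝ :=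
  (‖x‖ ^ 4 + 16 * gnorm g t ^ 2) ^ ((1 : ℝ) / 4)

variable (g : V₂ →ₗ[ℝ] V₂ →ₗ[ℝ] ℝ) (x : V₁) (t : V₂)

theorem kaplanNorm_pow_four : kaplanNorm g x t ^ 4 = ‖x‖ ^ 4 + 16 * gnorm g t ^ 2 := by
  rw [kaplanNorm, ← Real.rpow_natCast, ← Real.rpow_mul (by positivity)]
  norm_num

theorem sq_norm_le_kaplanNorm_sq : ‖x‖ ^ 2 ≤ kaplanNorm g x t ^ 2 := by
  refine le_of_pow_le_pow_left₀ two_ne_zero (by positivity) ?_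
  calc (‖x‖ ^ 2) ^ 2 ≤ ‖x‖ ^ 4 + 16 * gnorm g t ^ 2 := by nlinarith [sq_nonneg (gnorm g t)]
    _ = (kaplanNorm g x t ^ 2) ^ 2 := by rw [← kaplanNorm_pow_four]; ring

theorem sixteen_mul_gnorm_sq_mul_sq_norm_le :
    16 * gnorm g t ^ 2 * ‖x‖ ^ 2 ≤ kaplanNorm g x t ^ 6 := by
  have h4 : 16 * gnorm g t ^ 2 ≤ kaplanNorm g x t ^ 4 := by
    rw [kaplanNorm_pow_four]; have := pow_nonneg (norm_nonneg x) 4; linarith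
  calc 16 * gnorm g t ^ 2 * ‖x‖ ^ 2 ≤ kaplanNorm g x t ^ 4 * kaplanNorm g x t ^ 2 :=
        mul_le_mul h4 (sq_norm_le_kaplanNorm_sq g x t) (by positivity) (by positivity)
    _ = kaplanNorm g x t ^ 6 := by ring

end KaplanNorm

section OpNormDeviation

variable {V₁ : Type*} [NormedAddCommGroup V₁] [InnerProductSpace ℝ V₁]
variable {V₂ : Type*} [AddCommGroup V₂] [Module ℝ V₂]

/-- Since `(J T)² + id` is symmetric, this is `sup_T ‖(J T)² + id‖` in operator norm. -/
def opNormDeviation (g : V₂ →ₗ[ℝ] V₂ →ₗ[ℝ] ℝ) (J : V₂ → V₁ →ₗ[ℝ] V₁) : ℝ :=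
  sSup {r | ∃ (x : V₁) (T : V₂), ‖x‖ = 1 ∧ gnorm g T = 1 ∧
    r = |⟪(J T ∘ₗ J T + LinearMap.id : V₁ →ₗ[ℝ] V₁) x, x⟫|}

theorem opNormDeviation_nonneg (g : V₂ →ₗ[ℝ] V₂ →ₗ[ℝ] ℝ) (J : V₂ → V₁ →ₗ[ℝ] V₁) :
    0 ≤ opNormDeviation g J :=
  Real.sSup_nonneg fun _ ⟨_, _, _, _, hr⟩ => hr ▸ abs_nonneg _

variable {B : V₁ →ₗ[ℝ] V₁ →ₗ[ℝ] V₂} {g : V₂ →ₗ[ℝ] V₂ →ₗ[ℝ] ℝ} {J : V₂ → V₁ →ₗ[ℝ] V₁}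

theorem IsJOp.abs_inner_le_opNormDeviation (hJ : IsJOp B g J) (hB : B.IsAlt) {C : ℝ}
    (hC : ∀ t x, ‖J t x‖ ≤ C * (gnorm g t * ‖x‖)) {x : V₁} {T : V₂} (hx : ‖x‖ = 1)
    (hT : gnorm g T = 1) :
    |⟪(J T ∘ₗ J T + LinearMap.id : V₁ →ₗ[ℝ] V₁) x, x⟫| ≤ opNormDeviation g J := by
  refine le_csSup ⟨C ^ 2 + 1, ?_⟩ ⟨x, T, hx, hT, rfl⟩
  rintro _ ⟨y, S, hy, hS, rfl⟩
  have := abs_inner_comp_self_add_smul_id_le (hJ.inner_apply_eq_neg hB S) (hC S y)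
  simpa [hy, hS] using this

theorem IsJOp.deltaOf_le_opNormDeviation [FiniteDimensional ℝ V₁] (hJ : IsJOp B g J)
    (hB : B.IsAlt) {C : ℝ} (hC : ∀ t x, ‖J t x‖ ≤ C * (gnorm g t * ‖x‖)) :
    deltaOf g J ≤ opNormDeviation g J := by
  refine inv_mul_le_of_le_mul₀ (Real.sqrt_nonneg _) (opNormDeviation_nonneg g J) ?_
  refine Real.sSup_le ?_ (mul_nonneg (Real.sqrt_nonneg _) (opNormDeviation_nonneg g J))
  rintro _ ⟨T, hT, rfl⟩
  exact hsNorm_le_of_abs_inner_le (isSymmetric_comp_self_add_id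
    (hJ.inner_apply_eq_neg hB T)) (opNormDeviation_nonneg g J)
    fun x hx => hJ.abs_inner_le_opNormDeviation hB hC hx hT

end OpNormDeviation

section SubLaplacianDefect

variable {V₁ : Type*} [NormedAddCommGroup V₁] [InnerProductSpace ℝ V₁]
variable {V₂ : Type*} [AddCommGroup V₂] [Module ℝ V₂]

def subLaplacianDefect (Q : ℝ) (g : V₂ →ₗ[ℝ] V₂ →ₗ[ℝ] ℝ) (J : V₂ → V₁ →ₗ[ℝ] V₁) {ι : Type*}
    [Fintype ι] (ε : ι → V₂) (x : V₁) (t : V₂) : ℝ :=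
  16 * (Q + 2) *
      ⟪((J t ∘ₗ J t) + gnorm g t ^ 2 • (LinearMap.id : V₁ →ₗ[ℝ] V₁)) x, x⟫ / kaplanNorm g x t ^ 6
    - 2 * ∑ q, ⟪((J (ε q) ∘ₗ J (ε q)) + (LinearMap.id : V₁ →ₗ[ℝ] V₁)) x, x⟫ / kaplanNorm g x t ^ 2

variable {B : V₁ →ₗ[ℝ] V₁ →ₗ[ℝ] V₂} {g : V₂ →ₗ[ℝ] V₂ →ₗ[ℝ] ℝ} {J : V₂ → V₁ →ₗ[ℝ] V₁}
  {ι : Type*} [Fintype ι] {ε : ι → V₂}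

theorem IsJOp.abs_subLaplacianDefect_le (hJ : IsJOp B g J) (hB : B.IsAlt) {C : ℝ}
    (hC : ∀ t x, ‖J t x‖ ≤ C * (gnorm g t * ‖x‖)) (hε : ∀ q, gnorm g (ε q) = 1) (Q : ℝ)
    (x : V₁) (t : V₂) :
    |subLaplacianDefect Q g J ε x t| ≤ (|Q + 2| + 2 * Fintype.card ι) * (C ^ 2 + 1) := by
  set N := kaplanNorm g x t
  have hfirst : |16 * (Q + 2) *
      ⟪(J t ∘ₗ J t + gnorm g t ^ 2 • LinearMap.id : V₁ →ₗ[ℝ] V₁) x, x⟫ / N ^ 6| ≤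
        |Q + 2| * (C ^ 2 + 1) := by
    rw [abs_div, abs_mul, abs_mul, abs_of_nonneg (by positivity : (0 : ℝ) ≤ N ^ 6),
      abs_of_nonneg (by norm_num : (0 : ℝ) ≤ 16)]
    refine div_le_of_le_mul₀ (by positivity) (by positivity) ?_
    calc 16 * |Q + 2| * |⟪(J t ∘ₗ J t + gnorm g t ^ 2 • LinearMap.id : V₁ →ₗ[ℝ] V₁) x, x⟫|
        ≤ 16 * |Q + 2| * ((C ^ 2 + 1) * (gnorm g t ^ 2 * ‖x‖ ^ 2)) := by
          gcongr
          exact abs_inner_comp_self_add_smul_id_le (hJ.inner_apply_eq_neg hB t) (hC t x)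
      _ = |Q + 2| * (C ^ 2 + 1) * (16 * gnorm g t ^ 2 * ‖x‖ ^ 2) := by ring
      _ ≤ |Q + 2| * (C ^ 2 + 1) * N ^ 6 := by
          gcongr
          exact sixteen_mul_gnorm_sq_mul_sq_norm_le g x t
  have hterm (q : ι) :
      |⟪(J (ε q) ∘ₗ J (ε q) + LinearMap.id : V₁ →ₗ[ℝ] V₁) x, x⟫ / N ^ 2| ≤ C ^ 2 + 1 := by
    rw [abs_div, abs_of_nonneg (by positivity : (0 : ℝ) ≤ N ^ 2)]
    refine div_le_of_le_mul₀ (by positivity) (by positivity) ?_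
    have := abs_inner_comp_self_add_smul_id_le (hJ.inner_apply_eq_neg hB (ε q)) (hC (ε q) x)
    simp only [hε, one_pow, one_smul, one_mul] at this
    nlinarith [sq_norm_le_kaplanNorm_sq g x t, sq_nonneg C]
  have hsecond : |2 * ∑ q, ⟪(J (ε q) ∘ₗ J (ε q) + LinearMap.id : V₁ →ₗ[ℝ] V₁) x, x⟫ / N ^ 2| ≤
      2 * Fintype.card ι * (C ^ 2 + 1) := by
    rw [abs_mul, abs_two, mul_assoc]
    gcongr
    refine (Finset.abs_sum_le_sum_abs _ _).trans ((Finset.sum_le_sum fun q _ => hterm q).trans ?_)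
    simp [mul_add]
  calc |subLaplacianDefect Q g J ε x t|
        ≤ |Q + 2| * (C ^ 2 + 1) + 2 * Fintype.card ι * (C ^ 2 + 1) :=
          (abs_sub _ _).trans (add_le_add hfirst hsecond)
    _ = (|Q + 2| + 2 * Fintype.card ι) * (C ^ 2 + 1) := by ring

theorem IsJOp.bddAbove_abs_subLaplacianDefect (hJ : IsJOp B g J) (hB : B.IsAlt) {C : ℝ}
    (hC : ∀ t x, ‖J t x‖ ≤ C * (gnorm g t * ‖x‖)) (hε : ∀ q, gnorm g (ε q) = 1) (Q : ℝ) :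
    BddAbove {r | ∃ (x : V₁) (t : V₂), ¬(x = 0 ∧ t = 0) ∧ r = |subLaplacianDefect Q g J ε x t|} :=
  ⟨_, fun _ ⟨x, t, _, hr⟩ => hr ▸ hJ.abs_subLaplacianDefect_le hB hC hε Q x t⟩

theorem subLaplacianDefect_mul_kaplanNorm_pow_six (Q : ℝ) (x : V₁) (t : V₂)
    (hN : kaplanNorm g x t ≠ 0) :
    subLaplacianDefect Q g J ε x t * kaplanNorm g x t ^ 6 =
      16 * (Q + 2) * ⟪(J t ∘ₗ J t + gnorm g t ^ 2 • LinearMap.id : V₁ →ₗ[ℝ] V₁) x, x⟫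
        - 2 * kaplanNorm g x t ^ 4 *
          ∑ q, ⟪(J (ε q) ∘ₗ J (ε q) + LinearMap.id : V₁ →ₗ[ℝ] V₁) x, x⟫ := by
  rw [subLaplacianDefect, ← Finset.sum_div]
  field_simp

theorem IsJOp.sub_one_mul_abs_inner_le (hJ : IsJOp B g J) (hB : B.IsAlt)
    {Q M D : ℝ} (hM : ∀ x t, ¬(x = 0 ∧ t = 0) → |subLaplacianDefect Q g J ε x t| ≤ M)
    (hD : ∀ x q, ‖x‖ = 1 → |⟪(J (ε q) ∘ₗ J (ε q) + LinearMap.id : V₁ →ₗ[ℝ] V₁) x, x⟫| ≤ D)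
    (hQ : 0 ≤ Q + 2) {u : ℝ} (hu : 1 ≤ u) {x : V₁} {T : V₂} (hx : ‖x‖ = 1)
    (hT : gnorm g T = 1) :
    (Q + 2) * (u - 1) * |⟪(J T ∘ₗ J T + LinearMap.id : V₁ →ₗ[ℝ] V₁) x, x⟫| ≤
      u * √u * M + 2 * u * Fintype.card ι * D := by
  set s := √(u - 1) / 4
  have hs : 16 * s ^ 2 = u - 1 := by
    rw [div_pow, Real.sq_sqrt (by linarith)]; ring
  set N := kaplanNorm g x (s • T)
  have hN4 : N ^ 4 = u := by
    rw [kaplanNorm_pow_four, hx, gnorm_smul, hT, abs_of_nonneg (by positivity)]; linarith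
  have hN2 : N ^ 2 = √u := by
    rw [← hN4, show N ^ 4 = (N ^ 2) ^ 2 by ring, Real.sqrt_sq (by positivity)]
  have hN0 : N ≠ 0 := fun h => by rw [h] at hN4; norm_num at hN4; linarith
  set a := ⟪(J T ∘ₗ J T + LinearMap.id : V₁ →ₗ[ℝ] V₁) x, x⟫
  set b := ∑ q, ⟪(J (ε q) ∘ₗ J (ε q) + LinearMap.id : V₁ →ₗ[ℝ] V₁) x, x⟫
  set Φ := subLaplacianDefect Q g J ε x (s • T)
  have hΦ : (Q + 2) * (u - 1) * a = Φ * (u * √u) + 2 * u * b := by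
    have h := subLaplacianDefect_mul_kaplanNorm_pow_six (J := J) (ε := ε) Q x (s • T) hN0
    rw [hJ.inner_smul_apply_self hB hT, show N ^ 6 = N ^ 4 * N ^ 2 by ring, hN4, hN2] at h
    rw [← hs]; linear_combination (-1 : ℝ) * h
  have hb : |b| ≤ Fintype.card ι * D :=
    (Finset.abs_sum_le_sum_abs _ _).trans <|
      (Finset.sum_le_sum fun q _ => hD x q hx).trans_eq (by simp)
  have hΦM : |Φ| ≤ M := hM x _ fun h => by simp [h.1] at hx
  have hu0 : 0 ≤ u := by linarith
  calc (Q + 2) * (u - 1) * |a| = |Φ * (u * √u) + 2 * u * b| := by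
        rw [← hΦ, abs_mul, abs_of_nonneg (mul_nonneg hQ (by linarith))]
    _ ≤ |Φ| * (u * √u) + 2 * u * |b| := by
        refine (abs_add_le _ _).trans_eq ?_
        rw [abs_mul Φ, abs_mul (2 * u), abs_of_nonneg (by positivity : 0 ≤ u * √u),
          abs_of_nonneg (by positivity : (0 : ℝ) ≤ 2 * u)]
    _ ≤ M * (u * √u) + 2 * u * (Fintype.card ι * D) := by gcongr
    _ = u * √u * M + 2 * u * Fintype.card ι * D := by ring

theorem IsJOp.sub_one_mul_opNormDeviation_le (hJ : IsJOp B g J) (hB : B.IsAlt) {C : ℝ}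
    (hC : ∀ t x, ‖J t x‖ ≤ C * (gnorm g t * ‖x‖)) (hε : ∀ q, gnorm g (ε q) = 1) {Q M : ℝ}
    (hM : ∀ x t, ¬(x = 0 ∧ t = 0) → |subLaplacianDefect Q g J ε x t| ≤ M) (hM0 : 0 ≤ M)
    (hQ : 0 < Q + 2) {u : ℝ} (hu : 1 < u) :
    (Q + 2) * (u - 1) * opNormDeviation g J ≤
      u * √u * M + 2 * u * Fintype.card ι * opNormDeviation g J := by
  have hc : 0 < (Q + 2) * (u - 1) := mul_pos hQ (sub_pos.mpr hu)
  rw [mul_comm, ← le_div_iff₀ hc]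
  refine Real.sSup_le ?_ (div_nonneg (by positivity [opNormDeviation_nonneg g J]) hc.le)
  rintro _ ⟨x, T, hx, hT, rfl⟩
  rw [le_div_iff₀ hc, mul_comm]
  exact hJ.sub_one_mul_abs_inner_le hB hM
    (fun y q hy => hJ.abs_inner_le_opNormDeviation hB hC hy (hε q)) hQ.le hu.le hx hT

end SubLaplacianDefect

theorem le_mul_of_forall_one_lt_sub_one_mul_le {m k Q D M : ℝ} (hm : 0 ≤ m) (hk : 0 ≤ k)
    (hQ : Q = m + 2 * k)
    (hD : ∀ u : ℝ, 1 < u → (Q + 2) * (u - 1) * D ≤ u * √u * M + 2 * u * k * D) :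
    D ≤ 3 * √(3 * (Q + 2)) / (2 * (m + 2) ^ ((3 : ℝ) / 2)) * M := by
  have hm2 : 0 < m + 2 := by linarith
  have hQ2 : 0 < Q + 2 := by linarith
  set u := 3 * (Q + 2) / (m + 2)
  have hmu : (m + 2) * u = 3 * (Q + 2) := by simp only [u]; field_simp
  have hu : 1 < u := by rw [lt_div_iff₀ hm2]; linarith
  have hmain : 2 * (Q + 2) * D ≤ u * √u * M := by
    have hid : (Q + 2) * (u - 1) - 2 * u * k = 2 * (Q + 2) := by
      linear_combination hmu + u * hQ
    calc 2 * (Q + 2) * D = (Q + 2) * (u - 1) * D - 2 * u * k * D := by rw [← hid]; ring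
      _ ≤ u * √u * M := by linarith [hD u hu]
  have hpow : (m + 2) ^ ((3 : ℝ) / 2) = (m + 2) * √(m + 2) := by
    rw [show (3 : ℝ) / 2 = 1 / 2 + 1 by norm_num, Real.rpow_add_one hm2.ne', Real.sqrt_eq_rpow,
      mul_comm]
  have hconst : u * √u = 2 * (Q + 2) * (3 * √(3 * (Q + 2)) / (2 * (m + 2) ^ ((3 : ℝ) / 2))) := by
    rw [hpow, ← hmu, Real.sqrt_mul hm2.le]
    field_simp
    linarith
  rw [hconst, mul_assoc _ _ M] at hmain
  exact le_of_mul_le_mul_left hmain (by positivity)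

theorem deviation_le_subLaplacian_defect_general
    {V₁ : Type*} [NormedAddCommGroup V₁] [InnerProductSpace ℝ V₁] [FiniteDimensional ℝ V₁]
    {V₂ : Type*} [AddCommGroup V₂] [Module ℝ V₂] [FiniteDimensional ℝ V₂]
    (m m₂ : ℕ) (hdim₂ : Module.finrank ℝ V₂ = m₂)
    (Q : ℕ) (hQ : Q = m + 2 * m₂)
    (B : V₁ →ₗ[ℝ] V₁ →ₗ[ℝ] V₂)
    (hAlt : ∀ U : V₁, B U U = 0)
    (g : V₂ →ₗ[ℝ] V₂ →ₗ[ℝ] ℝ)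
    (J : V₂ → V₁ →ₗ[ℝ] V₁) (hJ : IsJOp B g J)
    (ε : Fin m₂ → V₂) (hε : ∀ q r : Fin m₂, g (ε q) (ε r) = if q = r then 1 else 0)
    (N : V₁ → V₂ → ℝ)
    (hN : ∀ (x : V₁) (t : V₂), N x t = (‖x‖ ^ 4 + 16 * gnorm g t ^ 2) ^ ((1 : ℝ) / 4))
    (Φ : V₁ → V₂ → ℝ)
    (hΦ : ∀ (x : V₁) (t : V₂), Φ x t =
      16 * ((Q : ℝ) + 2) *
          ⟪((J t ∘ₗ J t) + gnorm g t ^ 2 • (LinearMap.id : V₁ →ₗ[ℝ] V₁)) x, x⟫ / N x t ^ 6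
        - 2 * ∑ q : Fin m₂,
            ⟪((J (ε q) ∘ₗ J (ε q)) + (LinearMap.id : V₁ →ₗ[ℝ] V₁)) x, x⟫ / N x t ^ 2) :
    deltaOf g J ≤
      (3 * Real.sqrt (3 * ((Q : ℝ) + 2)) / (2 * ((m : ℝ) + 2) ^ ((3 : ℝ) / 2))) *
        sSup { r : ℝ | ∃ (x : V₁) (t : V₂), ¬(x = 0 ∧ t = 0) ∧ r = |Φ x t| } := by
  obtain rfl : N = kaplanNorm g := funext fun x => funext (hN x)
  obtain rfl : Φ = subLaplacianDefect Q g J ε := funext fun x => funext (hΦ x)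
  obtain ⟨C, hC⟩ := hJ.exists_norm_apply_le hε (by simp [hdim₂])
  have hε₁ (q : Fin m₂) : gnorm g (ε q) = 1 := by simp [gnorm, hε]
  refine (hJ.deltaOf_le_opNormDeviation hAlt hC).trans <|
    le_mul_of_forall_one_lt_sub_one_mul_le m.cast_nonneg m₂.cast_nonneg (by exact_mod_cast hQ)
      fun u hu => ?_
  simpa using hJ.sub_one_mul_opNormDeviation_le hAlt hC hε₁
    (fun x t h => le_csSup (hJ.bddAbove_abs_subLaplacianDefect hAlt hC hε₁ Q) ⟨x, t, h, rfl⟩)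
    (Real.sSup_nonneg fun _ ⟨_, _, _, hr⟩ => hr ▸ abs_nonneg _) (by positivity) hu

/-- Converse stability estimate for the sub-Laplacian of the Kaplan quasinorm: with
`Q = m + 2m₂` and `Φ_g` as below,
`δ(g) ≤ (3√(3(Q+2)) / (2(m+2)^{3/2})) · sup { |Φ_g(x,t)| : (x,t) ≠ (0,0) }`. -/
theorem deviation_le_subLaplacian_defect
    {V₁ : Type*} [NormedAddCommGroup V₁] [InnerProductSpace ℝ V₁] [FiniteDimensional ℝ V₁]
    {V₂ : Type*} [AddCommGroup V₂] [Module ℝ V₂] [FiniteDimensional ℝ V₂]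
    (m m₂ : ℕ) (hm : 1 ≤ m) (hdim₁ : Module.finrank ℝ V₁ = m)
    (hm₂ : 1 ≤ m₂) (hdim₂ : Module.finrank ℝ V₂ = m₂)
    (Q : ℕ) (hQ : Q = m + 2 * m₂)
    (B : V₁ →ₗ[ℝ] V₁ →ₗ[ℝ] V₂)
    (hAlt : ∀ U : V₁, B U U = 0)
    (hSpan : Submodule.span ℝ {t : V₂ | ∃ U V : V₁, B U V = t} = ⊤)
    (g : V₂ →ₗ[ℝ] V₂ →ₗ[ℝ] ℝ) (hg : IsInnerProd g)
    (J : V₂ → V₁ →ₗ[ℝ] V₁) (hJ : IsJOp B g J)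
    (ε : Fin m₂ → V₂) (hε : ∀ q r : Fin m₂, g (ε q) (ε r) = if q = r then 1 else 0)
    (N : V₁ → V₂ → ℝ)
    (hN : ∀ (x : V₁) (t : V₂), N x t = (‖x‖ ^ 4 + 16 * gnorm g t ^ 2) ^ ((1 : ℝ) / 4))
    (Φ : V₁ → V₂ → ℝ)
    (hΦ : ∀ (x : V₁) (t : V₂), Φ x t =
      16 * ((Q : ℝ) + 2) *
          ⟪((J t ∘ₗ J t) + gnorm g t ^ 2 • (LinearMap.id : V₁ →ₗ[ℝ] V₁)) x, x⟫ / N x t ^ 6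
        - 2 * ∑ q : Fin m₂,
            ⟪((J (ε q) ∘ₗ J (ε q)) + (LinearMap.id : V₁ →ₗ[ℝ] V₁)) x, x⟫ / N x t ^ 2) :
    deltaOf g J ≤
      (3 * Real.sqrt (3 * ((Q : ℝ) + 2)) / (2 * ((m : ℝ) + 2) ^ ((3 : ℝ) / 2))) *
        sSup { r : ℝ | ∃ (x : V₁) (t : V₂), ¬(x = 0 ∧ t = 0) ∧ r = |Φ x t| } :=
  deviation_le_subLaplacian_defect_general m m₂ hdim₂ Q hQ B hAlt g J hJ ε hε N hN Φ hΦ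

end
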